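/- In the weight lattice of E₆, for every integer i with 1 ≤ i ≤ 11, the weight ω₅ - (i+1)·ω₁ + ρ is singular (orthogonal to some coroot of E₆). -/

import Mathlib

open Finset

namespace E6

/-- The Cartan matrix of `E₆` in Bourbaki numbering. -/
def A : Fin 6 → Fin 6 → ℤ :=
  ![![2, 0, -1, 0, 0, 0],
    ![0, 2, 0, -1, 0, 0],
    ![-1, 0, 2, -1, 0, 0],
    ![0, -1, -1, 2, -1, 0],
    ![0, 0, 0, -1, 2, -1],
    ![0, 0, 0, 0, -1, 2]]

/-- The weight lattice of `E₆`, with coordinates in the basis of fundamental weights. -/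
abbrev Wt := Fin 6 → ℤ

/-- The fundamental weight `ωᵢ₊₁` (Bourbaki numbering; `ω 0 = ω₁`, ..., `ω 5 = ω₆`). -/
def ω (i : Fin 6) : Wt := fun j => if j = i then 1 else 0

/-- `ρ`, the sum of the fundamental weights. -/
def ρ : Wt := fun _ => 1

/-- The simple reflection `s_{αᵢ₊₁}` on the weight lattice, in fundamental weight
coordinates: `sᵢ(λ) = λ - ⟨λ, αᵢ∨⟩ αᵢ`. -/
def reflFun (i : Fin 6) (l : Wt) : Wt := fun j => l j - l i * A i j

lemma A_diag (i : Fin 6) : A i i = 2 := by fin_cases i <;> rfl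

lemma refl_invol (i : Fin 6) (l : Wt) : reflFun i (reflFun i l) = l := by
  funext j
  simp only [reflFun]
  rw [A_diag]
  ring

/-- The simple reflection as a bijection of the weight lattice. -/
def s (i : Fin 6) : Equiv.Perm Wt :=
  ⟨reflFun i, reflFun i, refl_invol i, refl_invol i⟩

/-- The Weyl group `W(E₆)`, realized faithfully on the weight lattice as the group
generated by the simple reflections. -/
def W : Subgroup (Equiv.Perm Wt) := Subgroup.closure (Set.range s)

/-- The simple root `αᵢ₊₁` written in fundamental weight coordinates (the `i`-th row of
the Cartan matrix). -/
def α (i : Fin 6) : Wt := A i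

/-- A weight is singular if it is orthogonal to some coroot, i.e. some Weyl translate of it
has a vanishing pairing with a simple coroot. -/
def Singular (l : Wt) : Prop := ∃ w ∈ W, ∃ j : Fin 6, w l j = 0

/-- A weight is strictly dominant if it pairs positively with every simple coroot. -/
def StrictDominant (l : Wt) : Prop := ∀ j, 0 < l j

/-- A weight is dominant if it pairs nonnegatively with every simple coroot. -/
def Dominant (l : Wt) : Prop := ∀ j, 0 ≤ l j

/-- The product of a word in the simple reflections. -/
def WordProd (l : List (Fin 6)) : Equiv.Perm Wt := (l.map s).prod

/-- `w` has length `n`: it is a product of `n` simple reflections and of no fewer. -/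
def LengthIs (w : Equiv.Perm Wt) (n : ℕ) : Prop :=
  (∃ l : List (Fin 6), l.length = n ∧ WordProd l = w) ∧
  ∀ l : List (Fin 6), WordProd l = w → n ≤ l.length

/-- Length with respect to words using only letters from `S`. -/
def LengthIsOn (S : Set (Fin 6)) (w : Equiv.Perm Wt) (n : ℕ) : Prop :=
  (∃ l : List (Fin 6), (∀ i ∈ l, i ∈ S) ∧ l.length = n ∧ WordProd l = w) ∧
  ∀ l : List (Fin 6), (∀ i ∈ l, i ∈ S) → WordProd l = w → n ≤ l.length

/-- The roots of `E₆` (in fundamental weight coordinates): the Weyl orbit of the simple roots. -/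
def IsRoot (b : Wt) : Prop := ∃ w ∈ W, ∃ i : Fin 6, w (α i) = b

/-- Positive roots: roots which are nonnegative integer combinations of the simple roots. -/
def IsPosRoot (b : Wt) : Prop :=
  IsRoot b ∧ ∃ c : Fin 6 → ℕ, b = fun j => ∑ i, (c i : ℤ) * A i j

/-- The Weyl group of the `D₅` subsystem generated by `s₂, …, s₆`. -/
def WD5 : Subgroup (Equiv.Perm Wt) := Subgroup.closure (s '' {i : Fin 6 | i ≠ 0})

/-- Lying in the span of the simple roots `α₂, …, α₆` of the `D₅` subsystem. -/
def InD5 (b : Wt) : Prop := ∃ c : Fin 6 → ℤ, c 0 = 0 ∧ b = fun j => ∑ i, c i * A i j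

end E6

/-!
In fundamental-weight coordinates `λ = ω₅ - (i+1)·ω₁ + ρ = (-i, 1, 1, 1, 2, 1)`. For each `i` we
exhibit a word `w` in the simple reflections and a simple coroot `αⱼ∨` with
`⟨w λ, αⱼ∨⟩ = 0`; equivalently, `λ` is orthogonal to the coroot of `w⁻¹ αⱼ`, which up to
sign is a positive root with `α₁`-coefficient `1` whose remaining coefficients, weighted by
`(1, 1, 1, 2, 1)`, add up to `i`.
-/

namespace E6

lemma wordProd_mem_W (l : List (Fin 6)) : WordProd l ∈ W :=
  W.list_prod_mem fun _ hx => by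
    obtain ⟨i, -, rfl⟩ := List.mem_map.mp hx
    exact Subgroup.subset_closure ⟨i, rfl⟩

lemma singular_of_wordProd_apply_eq_zero {v : Wt} (l : List (Fin 6)) (j : Fin 6)
    (h : WordProd l v j = 0) : Singular v :=
  ⟨WordProd l, wordProd_mem_W l, j, h⟩

lemma omega_five_sub_smul_omega_one_add_rho (i : ℤ) :
    ω 4 - (i + 1) • ω 0 + ρ = ![-i, 1, 1, 1, 2, 1] := by
  funext j
  fin_cases j <;> simp [ω, ρ]

/-- for `1 ≤ i ≤ 11`, the weight `ω₅ - (i+1)·ω₁ + ρ` is singular. -/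
theorem stmt6 :
    ∀ i : ℤ, 1 ≤ i → i ≤ 11 → Singular (ω 4 - (i + 1) • ω 0 + ρ) := by
  intro i h1 h2
  rw [omega_five_sub_smul_omega_one_add_rho]
  interval_cases i
  · exact singular_of_wordProd_apply_eq_zero [0] 2 (by decide)
  · exact singular_of_wordProd_apply_eq_zero [2, 0] 3 (by decide)
  · exact singular_of_wordProd_apply_eq_zero [2, 1, 0] 3 (by decide)
  · exact singular_of_wordProd_apply_eq_zero [3, 2, 0] 4 (by decide)
  · exact singular_of_wordProd_apply_eq_zero [3, 2, 1, 0] 4 (by decide)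
  · exact singular_of_wordProd_apply_eq_zero [4, 3, 2, 1, 0] 5 (by decide)
  · exact singular_of_wordProd_apply_eq_zero [4, 3, 2, 1, 3, 0] 5 (by decide)
  · exact singular_of_wordProd_apply_eq_zero [4, 3, 2, 1, 3, 0, 2] 5 (by decide)
  · exact singular_of_wordProd_apply_eq_zero [4, 3, 2, 1, 3, 4, 0] 5 (by decide)
  · exact singular_of_wordProd_apply_eq_zero [4, 3, 2, 1, 3, 4, 0, 2] 5 (by decide)
  · exact singular_of_wordProd_apply_eq_zero [4, 3, 2, 1, 3, 4, 0, 2, 3] 5 (by decide)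

end E6
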